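/- Let n ≥ 1, let M, K ∈ ℝ^{n×n} be constant skew-symmetric matrices, and let S : ℝⁿ → ℝ be twice continuously differentiable. Let z : ℝ² → ℝⁿ be a differentiable solution of the multi-symplectic Hamiltonian system M z_t + K z_x = ∇S(z), and let U, V : ℝ² → ℝⁿ be differentiable solutions of the variational equation M W_t + K W_x = ∇²S(z(x,t)) W (with W = U and W = V respectively, ∇²S the Hessian of S). Then the conservation law of symplecticity holds: ∂/∂t ⟨M U, V⟩ + ∂/∂x ⟨K U, V⟩ = 0 at every point of ℝ², where ⟨·,·⟩ is the standard inner product on ℝⁿ. -/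

import Mathlib

open Matrix

section Calculus

variable {𝕜 ι F : Type*} [NontriviallyNormedField 𝕜] [Fintype ι]
  [NormedAddCommGroup F] [NormedSpace 𝕜 F]

theorem HasFDerivAt.hasDerivAt_update [DecidableEq ι] {f : (ι → 𝕜) → F} {f' : (ι → 𝕜) →L[𝕜] F}
    {Z : ι → 𝕜} (hf : HasFDerivAt f f' Z) (i : ι) :
    HasDerivAt (fun s => f (Function.update Z i s)) (f' (Pi.single i 1)) (Z i) := by
  rw [← Function.update_eq_self i Z] at hf
  exact hf.comp_hasDerivAt (Z i) (_root_.hasDerivAt_update Z i (Z i))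

theorem DifferentiableAt.hasDerivAt_pi_deriv {u : 𝕜 → ι → 𝕜} {t : 𝕜}
    (hu : DifferentiableAt 𝕜 u t) :
    HasDerivAt u (fun i => deriv (fun s => u s i) t) t :=
  hasDerivAt_pi.2 fun i => (hasDerivAt_pi.1 hu.hasDerivAt i).differentiableAt.hasDerivAt

theorem HasDerivAt.mulVec_dotProduct (A : Matrix ι ι 𝕜) {u v : 𝕜 → ι → 𝕜} {u' v' : ι → 𝕜}
    {t : 𝕜} (hu : HasDerivAt u u' t) (hv : HasDerivAt v v' t) :
    HasDerivAt (fun s => (A *ᵥ u s) ⬝ᵥ v s) ((A *ᵥ u') ⬝ᵥ v t + (A *ᵥ u t) ⬝ᵥ v') t := by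
  have hAu : HasDerivAt (fun s => A *ᵥ u s) (A *ᵥ u') t :=
    hasDerivAt_pi.2 fun i => HasDerivAt.fun_sum fun j _ => (hasDerivAt_pi.1 hu j).const_mul (A i j)
  have h := HasDerivAt.fun_sum fun i (_ : i ∈ Finset.univ) =>
    (hasDerivAt_pi.1 hAu i).fun_mul (hasDerivAt_pi.1 hv i)
  simpa only [dotProduct, Finset.sum_add_distrib] using h

end Calculus

section Hessian

variable {ι : Type*} [Fintype ι] [DecidableEq ι]

noncomputable def partialGradient (S : (ι → ℝ) → ℝ) (Z : ι → ℝ) : ι → ℝ :=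
  fun μ => deriv (fun s => S (Function.update Z μ s)) (Z μ)

noncomputable def partialHessian (S : (ι → ℝ) → ℝ) (Z : ι → ℝ) : Matrix ι ι ℝ :=
  Matrix.of fun μ ν => deriv (fun s => partialGradient S (Function.update Z μ s) ν) (Z μ)

theorem partialGradient_eq_fderiv {S : (ι → ℝ) → ℝ} (hS : Differentiable ℝ S) :
    partialGradient S = fun Z ν => fderiv ℝ S Z (Pi.single ν 1) := by
  ext Z ν
  exact ((hS Z).hasFDerivAt.hasDerivAt_update ν).deriv

theorem partialHessian_apply {S : (ι → ℝ) → ℝ} (hS : ContDiff ℝ 2 S) (Z : ι → ℝ) (μ ν : ι) :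
    partialHessian S Z μ ν = fderiv ℝ (fderiv ℝ S) Z (Pi.single μ 1) (Pi.single ν 1) := by
  have hS' : Differentiable ℝ (fderiv ℝ S) :=
    (hS.fderiv_right le_rfl).differentiable one_ne_zero
  have h := ((ContinuousLinearMap.apply ℝ ℝ (Pi.single ν (1 : ℝ))).hasFDerivAt).comp_hasDerivAt
    (Z μ) ((hS' Z).hasFDerivAt.hasDerivAt_update μ)
  simp only [partialHessian, partialGradient_eq_fderiv (hS.differentiable two_ne_zero), of_apply]
  exact h.deriv

theorem partialHessian_isSymm {S : (ι → ℝ) → ℝ} (hS : ContDiff ℝ 2 S) (Z : ι → ℝ) :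
    (partialHessian S Z).IsSymm := by
  ext μ ν
  rw [transpose_apply, partialHessian_apply hS, partialHessian_apply hS]
  exact (hS.contDiffAt.isSymmSndFDerivAt (by simp)) _ _

end Hessian

section Algebra

variable {ι R : Type*} [Fintype ι] [CommRing R]

theorem Matrix.mulVec_dotProduct_eq_transpose {A : Matrix ι ι R} (u w : ι → R) :
    (A *ᵥ u) ⬝ᵥ w = u ⬝ᵥ (Aᵀ *ᵥ w) := by
  rw [dotProduct_comm, dotProduct_mulVec, mulVec_transpose, dotProduct_comm]

/-- Testing the variational equation of `u` against `v` and that of `v` against `u`, the Hessian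
terms cancel by symmetry of `H` and, by skew-symmetry of `M` and `K`, what remains is the
divergence of the symplectic densities. -/
theorem Matrix.symplecticity_flux_eq_zero {M K H : Matrix ι ι R} (hM : Mᵀ = -M) (hK : Kᵀ = -K)
    (hH : H.IsSymm) {u v ut ux vt vx : ι → R}
    (hu : M *ᵥ ut + K *ᵥ ux = H *ᵥ u) (hv : M *ᵥ vt + K *ᵥ vx = H *ᵥ v) :
    (M *ᵥ ut) ⬝ᵥ v + (M *ᵥ u) ⬝ᵥ vt + ((K *ᵥ ux) ⬝ᵥ v + (K *ᵥ u) ⬝ᵥ vx) = 0 := by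
  have key : (M *ᵥ ut + K *ᵥ ux) ⬝ᵥ v = u ⬝ᵥ (M *ᵥ vt + K *ᵥ vx) := by
    rw [hu, hv, mulVec_dotProduct_eq_transpose, hH.eq]
  rw [mulVec_dotProduct_eq_transpose u, mulVec_dotProduct_eq_transpose u, hM, hK]
  simp only [add_dotProduct, dotProduct_add, neg_mulVec, dotProduct_neg] at key ⊢
  linear_combination key

end Algebra

theorem multisymplectic_hamiltonian_symplecticity_conservation_general
    (n : ℕ) (M K : Matrix (Fin n) (Fin n) ℝ)
    (hM : Mᵀ = -M) (hK : Kᵀ = -K)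
    (S : (Fin n → ℝ) → ℝ) (hS : ContDiff ℝ 2 S)
    (z U V : ℝ × ℝ → Fin n → ℝ)
    (hU : Differentiable ℝ U) (hV : Differentiable ℝ V) :
    -- the gradient of `S`:
    let gradS : (Fin n → ℝ) → Fin n → ℝ := fun Z μ =>
      deriv (fun s => S (Function.update Z μ s)) (Z μ)
    -- the Hessian of `S`:
    let hessS : (Fin n → ℝ) → Matrix (Fin n) (Fin n) ℝ := fun Z =>
      Matrix.of fun μ ν => deriv (fun s => gradS (Function.update Z μ s) ν) (Z μ)
    (∀ x t : ℝ,
      M *ᵥ (fun μ => deriv (fun s => z (x, s) μ) t)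
        + K *ᵥ (fun μ => deriv (fun s => z (s, t) μ) x) = gradS (z (x, t))) →
    (∀ x t : ℝ,
      M *ᵥ (fun μ => deriv (fun s => U (x, s) μ) t)
        + K *ᵥ (fun μ => deriv (fun s => U (s, t) μ) x) =
        hessS (z (x, t)) *ᵥ U (x, t)) →
    (∀ x t : ℝ,
      M *ᵥ (fun μ => deriv (fun s => V (x, s) μ) t)
        + K *ᵥ (fun μ => deriv (fun s => V (s, t) μ) x) =
        hessS (z (x, t)) *ᵥ V (x, t)) →
    ∀ x t : ℝ,
      deriv (fun s => (M *ᵥ U (x, s)) ⬝ᵥ V (x, s)) t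
        + deriv (fun s => (K *ᵥ U (s, t)) ⬝ᵥ V (s, t)) x = 0 := by
  intro _ _ _ hUeq hVeq x t
  have curve_t : ∀ W : ℝ × ℝ → Fin n → ℝ, Differentiable ℝ W →
      HasDerivAt (fun s => W (x, s)) (fun μ => deriv (fun s => W (x, s) μ) t) t :=
    fun W hW => ((hW.comp (by fun_prop)) t).hasDerivAt_pi_deriv
  have curve_x : ∀ W : ℝ × ℝ → Fin n → ℝ, Differentiable ℝ W →
      HasDerivAt (fun s => W (s, t)) (fun μ => deriv (fun s => W (s, t) μ) x) x :=
    fun W hW => ((hW.comp (by fun_prop)) x).hasDerivAt_pi_deriv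
  rw [((curve_t U hU).mulVec_dotProduct M (curve_t V hV)).deriv,
    ((curve_x U hU).mulVec_dotProduct K (curve_x V hV)).deriv]
  exact symplecticity_flux_eq_zero hM hK (partialHessian_isSymm hS _) (hUeq x t) (hVeq x t)

/-- For constant skew-symmetric matrices `M K ∈ ℝ^{n×n}` and
`S : ℝⁿ → ℝ` of class `C²`, let `z` be a differentiable solution of the
multi-symplectic Hamiltonian system `M z_t + K z_x = ∇S(z)` and let `U, V` be
differentiable solutions of the variational equation
`M W_t + K W_x = ∇²S(z(x,t)) W`. Then the conservation law of symplecticity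
`∂_t ⟨M U, V⟩ + ∂_x ⟨K U, V⟩ = 0` holds at every point of `ℝ²`. -/
theorem multisymplectic_hamiltonian_symplecticity_conservation
    (n : ℕ) (hn : 1 ≤ n) (M K : Matrix (Fin n) (Fin n) ℝ)
    (hM : Mᵀ = -M) (hK : Kᵀ = -K)
    (S : (Fin n → ℝ) → ℝ) (hS : ContDiff ℝ 2 S)
    (z U V : ℝ × ℝ → Fin n → ℝ)
    (hz : Differentiable ℝ z) (hU : Differentiable ℝ U)
    (hV : Differentiable ℝ V) :
    -- the gradient of `S`:
    let gradS : (Fin n → ℝ) → Fin n → ℝ := fun Z μ =>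
      deriv (fun s => S (Function.update Z μ s)) (Z μ)
    -- the Hessian of `S`:
    let hessS : (Fin n → ℝ) → Matrix (Fin n) (Fin n) ℝ := fun Z =>
      Matrix.of fun μ ν => deriv (fun s => gradS (Function.update Z μ s) ν) (Z μ)
    (∀ x t : ℝ,
      M *ᵥ (fun μ => deriv (fun s => z (x, s) μ) t)
        + K *ᵥ (fun μ => deriv (fun s => z (s, t) μ) x) = gradS (z (x, t))) →
    (∀ x t : ℝ,
      M *ᵥ (fun μ => deriv (fun s => U (x, s) μ) t)
        + K *ᵥ (fun μ => deriv (fun s => U (s, t) μ) x) =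
        hessS (z (x, t)) *ᵥ U (x, t)) →
    (∀ x t : ℝ,
      M *ᵥ (fun μ => deriv (fun s => V (x, s) μ) t)
        + K *ᵥ (fun μ => deriv (fun s => V (s, t) μ) x) =
        hessS (z (x, t)) *ᵥ V (x, t)) →
    ∀ x t : ℝ,
      deriv (fun s => (M *ᵥ U (x, s)) ⬝ᵥ V (x, s)) t
        + deriv (fun s => (K *ᵥ U (s, t)) ⬝ᵥ V (s, t)) x = 0 :=
  multisymplectic_hamiltonian_symplecticity_conservation_general n M K hM hK S hS z U V hU hV
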